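/- arXiv:math/0702223 — 2 statements merged into one kernel-verified Lean document; each statement's English description precedes it below -/
import Mathlib

section
/- If f(t) = Σ a_n tⁿ and g(t) = Σ b_n tⁿ are formal power series with a_0 = b_0 = 1 related by the exponential formula g(t) = exp(Σ_{n≥1} (1/n)·f(tⁿ)), then f can be recovered by Möbius inversion: f(t) = Σ_{n≥1} (μ(n)/n)·log(g(tⁿ)), where μ is the Möbius function. -/
open PowerSeries Finset

/-- Möbius inversion for the exponential formula on formal power series over `ℚ`.
Suppose `f` has zero constant term, `g` has constant term `1`, and
`g(t) = exp (Σ_{n≥1} (1/n) f(tⁿ))`.  Here the auxiliary series `L = Σ_{n≥1} (1/n) f(tⁿ)`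
is described by its coefficients, the equation `g = exp L` is encoded by `g' = L'·g`
(with the constant terms as given), and `M = log g` is encoded by `M'·g = g'` with
`M(0) = 0`.  Then `f(t) = Σ_{n≥1} (μ(n)/n) log (g(tⁿ))`, i.e. the coefficients of `f`
are obtained from those of `M = log g` by Möbius inversion. -/
theorem stmt_15 (f g L M : PowerSeries ℚ)
    (hf0 : constantCoeff f = 0) (hg0 : constantCoeff g = 1)
    (hL : ∀ m : ℕ, coeff m L = ∑ n ∈ m.divisors, (1 / (n : ℚ)) * coeff (m / n) f)
    (hexp : derivative ℚ g = derivative ℚ L * g)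
    (hM0 : constantCoeff M = 0)
    (hlog : derivative ℚ M * g = derivative ℚ g) :
    ∀ m : ℕ, coeff m f =
      ∑ n ∈ m.divisors, ((ArithmeticFunction.moebius n : ℚ) / n) * coeff (m / n) M := by
  -- g ≠ 0
  have hgne : g ≠ 0 := by
    intro h; rw [h, map_zero] at hg0; exact one_ne_zero hg0.symm
  -- derivative M = derivative L
  have hder : derivative ℚ M = derivative ℚ L := by
    have : derivative ℚ M * g = derivative ℚ L * g := by rw [hlog, hexp]
    exact mul_right_cancel₀ hgne this
  -- M = L coefficient-wise
  have hM : ∀ m : ℕ, coeff m M = ∑ n ∈ m.divisors, (1 / (n : ℚ)) * coeff (m / n) f := by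
    intro m
    rw [← hL m]
    cases m with
    | zero =>
      simpa [PowerSeries.coeff_zero_eq_constantCoeff, hM0, Nat.divisors_zero] using
        (by simp [hL 0, hM0] : coeff 0 M = coeff 0 L)
    | succ m =>
      have h1 : coeff m (derivative ℚ M) = coeff m (derivative ℚ L) := by rw [hder]
      rw [PowerSeries.coeff_derivative, PowerSeries.coeff_derivative] at h1
      have hm1 : ((m : ℚ) + 1) ≠ 0 := by positivity
      exact mul_right_cancel₀ hm1 h1
  -- Möbius inversion
  have key := (ArithmeticFunction.sum_eq_iff_sum_smul_moebius_eq
      (f := fun d => (d : ℚ) * coeff d f)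
      (g := fun n => (n : ℚ) * coeff n M)).mp ?_
  · intro m
    cases Nat.eq_zero_or_pos m with
    | inl h => simp [h, hf0, PowerSeries.coeff_zero_eq_constantCoeff]
    | inr hm =>
      have h := key m hm
      rw [Nat.sum_divisorsAntidiagonal (f := fun i j =>
        (ArithmeticFunction.moebius i) • ((j : ℚ) * coeff j M))] at h
      have hmne : (m : ℚ) ≠ 0 := Nat.cast_ne_zero.mpr hm.ne'
      have : coeff m f = (1 / (m : ℚ)) *
          ∑ i ∈ m.divisors, (ArithmeticFunction.moebius i) • ((↑(m / i) : ℚ) * coeff (m / i) M) := by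
        rw [h]; field_simp
      rw [this, Finset.mul_sum]
      apply Finset.sum_congr rfl
      intro n hn
      obtain ⟨hnd, _⟩ := Nat.mem_divisors.mp hn
      have hn0 : (n : ℚ) ≠ 0 := Nat.cast_ne_zero.mpr (Nat.pos_of_mem_divisors hn).ne'
      have hcast : ((m / n : ℕ) : ℚ) = (m : ℚ) / n := by
        rw [Nat.cast_div hnd hn0]
      rw [hcast, zsmul_eq_mul]
      field_simp
  · intro n hn
    have hnM := hM n
    have : ((n : ℚ)) * coeff n M = ∑ d ∈ n.divisors, ((n : ℚ) / d) * coeff (n / d) f := by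
      rw [hnM, Finset.mul_sum]
      apply Finset.sum_congr rfl
      intro d hd
      field_simp
    rw [this, ← Nat.sum_div_divisors n (fun d => (d : ℚ) * coeff d f)]
    apply Finset.sum_congr rfl
    intro d hd
    obtain ⟨hdd, _⟩ := Nat.mem_divisors.mp hd
    have hd0 : (d : ℚ) ≠ 0 := Nat.cast_ne_zero.mpr (Nat.pos_of_mem_divisors hd).ne'
    rw [Nat.cast_div hdd hd0]
end

section
/- The number of subgroups of index n in the free product ℤ/2ℤ ∗ ℤ/3ℤ equals a_n/(n-1)!, where a_n is the number of pairs (τ₁, τ₂) of permutations of Fin n with τ₁² = id and τ₂³ = id such that the subgroup generated by τ₁ and τ₂ acts transitively on Fin n. -/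
open Nat

/-- The modular group as the free product `ℤ/2ℤ ∗ ℤ/3ℤ`. -/
abbrev ModularFP : Type :=
  Monoid.Coprod (Multiplicative (ZMod 2)) (Multiplicative (ZMod 3))

/-- A pair of permutations `(τ₁, τ₂)` of `Fin n` with `τ₁² = 1`, `τ₂³ = 1`, generating a
subgroup acting transitively on `Fin n`. -/
def TransPair (n : ℕ) (p : Equiv.Perm (Fin n) × Equiv.Perm (Fin n)) : Prop :=
  p.1 ^ 2 = 1 ∧ p.2 ^ 3 = 1 ∧
    ∀ x y : Fin n, ∃ g ∈ Subgroup.closure {p.1, p.2}, g x = y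


namespace Stmt18Aux

open Equiv Subgroup MulAction Monoid

/-- Hom from `Multiplicative (ZMod k)` determined by an element of order dividing `k`. -/
def zmodHom {P : Type*} [Group P] (k : ℕ) [NeZero k] (τ : P) (h : τ ^ k = 1) :
    Multiplicative (ZMod k) →* P where
  toFun x := τ ^ (Multiplicative.toAdd x).val
  map_one' := by
    show τ ^ (0 : ZMod k).val = 1
    simp [ZMod.val_zero]
  map_mul' x y := by
    show τ ^ ((Multiplicative.toAdd x) + (Multiplicative.toAdd y)).val = _
    rw [ZMod.val_add, ← pow_eq_pow_mod _ h, pow_add]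

lemma zmodHom_ofAdd_one {P : Type*} [Group P] (k : ℕ) [NeZero k] (hk : 1 < k) (τ : P)
    (h : τ ^ k = 1) : zmodHom k τ h (Multiplicative.ofAdd (1 : ZMod k)) = τ := by
  have : Fact (1 < k) := ⟨hk⟩
  show τ ^ (1 : ZMod k).val = τ
  rw [ZMod.val_one, pow_one]

def ga : ModularFP := Monoid.Coprod.inl (Multiplicative.ofAdd (1 : ZMod 2))
def gb : ModularFP := Monoid.Coprod.inr (Multiplicative.ofAdd (1 : ZMod 3))

lemma ga_sq : ga ^ 2 = 1 := by
  rw [ga, ← map_pow, ← map_one Monoid.Coprod.inl]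
  congr 1

lemma gb_cube : gb ^ 3 = 1 := by
  rw [gb, ← map_pow, ← map_one Monoid.Coprod.inr]
  congr 1

lemma mem_closure_ga_gb (x : ModularFP) : x ∈ Subgroup.closure {ga, gb} := by
  induction x using Monoid.Coprod.induction_on with
  | inl m =>
    have : Monoid.Coprod.inl m = ga ^ (Multiplicative.toAdd m).val := by
      rw [ga, ← map_pow]
      congr 1
      show m = Multiplicative.ofAdd ((Multiplicative.toAdd m).val • (1 : ZMod 2))
      simp [nsmul_eq_mul, ZMod.natCast_val, ZMod.cast_id]
    rw [this]
    exact pow_mem (Subgroup.subset_closure (by simp)) _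
  | inr m =>
    have : Monoid.Coprod.inr m = gb ^ (Multiplicative.toAdd m).val := by
      rw [gb, ← map_pow]
      congr 1
      show m = Multiplicative.ofAdd ((Multiplicative.toAdd m).val • (1 : ZMod 3))
      simp [nsmul_eq_mul, ZMod.natCast_val, ZMod.cast_id]
    rw [this]
    exact pow_mem (Subgroup.subset_closure (by simp)) _
  | mul x y hx hy => exact mul_mem hx hy

lemma closure_ga_gb : Subgroup.closure {ga, gb} = ⊤ :=
  top_unique fun x _ => mem_closure_ga_gb x

lemma hom_ext {P : Type*} [Group P] {f g : ModularFP →* P}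
    (ha : f ga = g ga) (hb : f gb = g gb) : f = g := by
  refine MonoidHom.ext fun x => ?_
  have hx := mem_closure_ga_gb x
  induction hx using Subgroup.closure_induction with
  | mem z hz => rcases hz with rfl | rfl <;> assumption
  | one => simp
  | mul a b _ _ h1 h2 => simp [map_mul, h1, h2]
  | inv a _ h => simp [map_inv, h]

end Stmt18Aux

section Part2
open Equiv Subgroup MulAction Monoid
namespace Stmt18Aux

variable {m : ℕ}

abbrev PP (m : ℕ) := Equiv.Perm (Fin (m+1)) × Equiv.Perm (Fin (m+1))

def qHom (q : {p : PP m // TransPair (m+1) p}) : ModularFP →* Equiv.Perm (Fin (m+1)) :=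
  Monoid.Coprod.lift (zmodHom 2 q.1.1 q.2.1) (zmodHom 3 q.1.2 q.2.2.1)

lemma qHom_ga (q : {p : PP m // TransPair (m+1) p}) : qHom q ga = q.1.1 := by
  rw [qHom, ga, Monoid.Coprod.lift_apply_inl, zmodHom_ofAdd_one 2 one_lt_two]

lemma qHom_gb (q : {p : PP m // TransPair (m+1) p}) : qHom q gb = q.1.2 := by
  rw [qHom, gb, Monoid.Coprod.lift_apply_inr, zmodHom_ofAdd_one 3 (by norm_num)]

def stabS (q : {p : PP m // TransPair (m+1) p}) : Subgroup ModularFP :=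
  (MulAction.stabilizer (Equiv.Perm (Fin (m+1))) (0 : Fin (m+1))).comap (qHom q)

lemma mem_stabS {q : {p : PP m // TransPair (m+1) p}} {g : ModularFP} :
    g ∈ stabS q ↔ qHom q g 0 = 0 := Iff.rfl

/-- Descended map `ModularFP ⧸ H → Fin (m+1)`, for `H = stabS q`. -/
def fQ (q : {p : PP m // TransPair (m+1) p}) (H : Subgroup ModularFP) (hH : stabS q = H)
    (c : ModularFP ⧸ H) : Fin (m+1) :=
  Quotient.liftOn' c (fun g => qHom q g 0) (by
    intro x y hxy
    have hxy' : x⁻¹ * y ∈ H := (QuotientGroup.leftRel_apply).mp hxy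
    rw [← hH, mem_stabS, map_mul, map_inv] at hxy'
    have := congrArg (qHom q x) hxy'
    simpa using this.symm)

lemma fQ_mk (q : {p : PP m // TransPair (m+1) p}) (H : Subgroup ModularFP) (hH : stabS q = H)
    (g : ModularFP) : fQ q H hH (QuotientGroup.mk g) = qHom q g 0 := rfl

lemma fQ_bijective (q : {p : PP m // TransPair (m+1) p}) (H : Subgroup ModularFP)
    (hH : stabS q = H) : Function.Bijective (fQ q H hH) := by
  constructor
  · intro c d h
    induction c using QuotientGroup.induction_on
    induction d using QuotientGroup.induction_on
    rename_i x y
    rw [fQ_mk, fQ_mk] at h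
    refine QuotientGroup.eq.mpr ?_
    rw [← hH, mem_stabS, map_mul, map_inv]
    rw [Equiv.Perm.mul_apply, ← h, ← Equiv.Perm.mul_apply, inv_mul_cancel, Equiv.Perm.one_apply]
  · intro x
    obtain ⟨g, hg, hgx⟩ := q.2.2.2 0 x
    have hle : Subgroup.closure {q.1.1, q.1.2} ≤ (qHom q).range := by
      rw [Subgroup.closure_le]
      rintro z (rfl | rfl)
      · exact ⟨ga, qHom_ga q⟩
      · exact ⟨gb, qHom_gb q⟩
    obtain ⟨w, rfl⟩ := hle hg
    exact ⟨QuotientGroup.mk w, hgx⟩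

lemma stabS_index (q : {p : PP m // TransPair (m+1) p}) : (stabS q).index = m + 1 := by
  rw [Subgroup.index, Nat.card_eq_of_bijective _ (fQ_bijective q (stabS q) rfl),
    Nat.card_eq_fintype_card, Fintype.card_fin]

end Stmt18Aux
end Part2

section Part3
open Equiv Subgroup MulAction Monoid
namespace Stmt18Aux

variable {m : ℕ}

def actHom (H : Subgroup ModularFP) (e : Fin (m+1) ≃ ModularFP ⧸ H) :
    ModularFP →* Equiv.Perm (Fin (m+1)) where
  toFun g := (e.trans (MulAction.toPerm g)).trans e.symm
  map_one' := by ext x; simp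
  map_mul' g h := by ext x; simp [mul_smul]

lemma actHom_apply (H : Subgroup ModularFP) (e : Fin (m+1) ≃ ModularFP ⧸ H) (g : ModularFP)
    (x : Fin (m+1)) : actHom H e g x = e.symm (g • e x) := rfl

def bPair (H : Subgroup ModularFP) (e : Fin (m+1) ≃ ModularFP ⧸ H) : PP m :=
  (actHom H e ga, actHom H e gb)

lemma bPair_trans (H : Subgroup ModularFP) (e : Fin (m+1) ≃ ModularFP ⧸ H) :
    TransPair (m+1) (bPair H e) := by
  refine ⟨?_, ?_, ?_⟩
  · rw [bPair]; show (actHom H e ga) ^ 2 = 1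
    rw [← map_pow, ga_sq, map_one]
  · rw [bPair]; show (actHom H e gb) ^ 3 = 1
    rw [← map_pow, gb_cube, map_one]
  · intro x y
    -- find g : ModularFP with g • e x = e y
    obtain ⟨u, hu⟩ := QuotientGroup.mk_surjective (e x)
    obtain ⟨v, hv⟩ := QuotientGroup.mk_surjective (e y)
    refine ⟨actHom H e (v * u⁻¹), ?_, ?_⟩
    · have : actHom H e (v * u⁻¹) ∈ Subgroup.closure ((actHom H e) '' ({ga, gb} : Set ModularFP)) := by
        rw [← MonoidHom.map_closure]
        exact ⟨v * u⁻¹, mem_closure_ga_gb _, rfl⟩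
      simpa [Set.image_pair, bPair] using this
    · rw [actHom_apply, ← hu, MulAction.Quotient.smul_mk]
      show e.symm (QuotientGroup.mk (v * u⁻¹ * u)) = y
      rw [inv_mul_cancel_right, hv, Equiv.symm_apply_apply]

lemma actHom_eq_qHom (H : Subgroup ModularFP) (e : Fin (m+1) ≃ ModularFP ⧸ H) :
    qHom ⟨bPair H e, bPair_trans H e⟩ = actHom H e := by
  refine hom_ext ?_ ?_
  · rw [qHom_ga]; rfl
  · rw [qHom_gb]; rfl

lemma stabS_bPair (H : Subgroup ModularFP) (e : Fin (m+1) ≃ ModularFP ⧸ H)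
    (he : e 0 = QuotientGroup.mk (1:ModularFP)) : stabS ⟨bPair H e, bPair_trans H e⟩ = H := by
  ext g
  rw [mem_stabS, actHom_eq_qHom, actHom_apply, he, MulAction.Quotient.smul_mk]
  constructor
  · intro h
    have : QuotientGroup.mk (g • (1:ModularFP)) = e 0 := by
      rw [← h, Equiv.apply_symm_apply]
    rw [he] at this
    have := QuotientGroup.eq.mp this
    simpa using inv_mem_iff.mp (by simpa using this)
  · intro hg
    have : QuotientGroup.mk (s := H) (g • (1:ModularFP)) = QuotientGroup.mk 1 := by
      refine QuotientGroup.eq.mpr ?_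
      simpa using inv_mem_iff.mpr hg
    rw [this, ← he, Equiv.symm_apply_apply]

end Stmt18Aux
end Part3

section Part4
open Equiv Subgroup MulAction Monoid
namespace Stmt18Aux

variable {m : ℕ}

noncomputable def eQ (q : {p : PP m // TransPair (m+1) p}) (H : Subgroup ModularFP)
    (hH : stabS q = H) : Fin (m+1) ≃ ModularFP ⧸ H :=
  (Equiv.ofBijective _ (fQ_bijective q H hH)).symm

lemma eQ_symm_apply (q : {p : PP m // TransPair (m+1) p}) (H : Subgroup ModularFP)
    (hH : stabS q = H) (c : ModularFP ⧸ H) : (eQ q H hH).symm c = fQ q H hH c := rfl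

lemma eQ_zero (q : {p : PP m // TransPair (m+1) p}) (H : Subgroup ModularFP)
    (hH : stabS q = H) : eQ q H hH 0 = QuotientGroup.mk (1:ModularFP) := by
  rw [eQ, Equiv.symm_apply_eq]
  show (0 : Fin (m+1)) = fQ q H hH (QuotientGroup.mk 1)
  rw [fQ_mk, map_one]
  rfl

lemma actHom_eQ (q : {p : PP m // TransPair (m+1) p}) (H : Subgroup ModularFP)
    (hH : stabS q = H) (g : ModularFP) : actHom H (eQ q H hH) g = qHom q g := by
  ext x
  rw [actHom_apply]
  obtain ⟨u, hu⟩ := QuotientGroup.mk_surjective (eQ q H hH x)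
  have hx : fQ q H hH (QuotientGroup.mk u) = x := by
    rw [hu, ← eQ_symm_apply, Equiv.symm_apply_apply]
  rw [← hu, MulAction.Quotient.smul_mk, eQ_symm_apply, fQ_mk, smul_eq_mul, map_mul]
  rw [fQ_mk] at hx
  rw [Equiv.Perm.mul_apply, hx]

noncomputable def fiberEquiv (H : Subgroup ModularFP) :
    {q : {p : PP m // TransPair (m+1) p} // stabS q = H} ≃
      {e : Fin (m+1) ≃ ModularFP ⧸ H // e 0 = QuotientGroup.mk (1:ModularFP)} where
  toFun q := ⟨eQ q.1 H q.2, eQ_zero q.1 H q.2⟩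
  invFun e := ⟨⟨bPair H e.1, bPair_trans H e.1⟩, stabS_bPair H e.1 e.2⟩
  left_inv := by
    rintro ⟨q, hq⟩
    refine Subtype.ext (Subtype.ext ?_)
    show bPair H (eQ q H hq) = q.1
    have h1 := actHom_eQ q H hq ga
    have h2 := actHom_eQ q H hq gb
    rw [qHom_ga] at h1
    rw [qHom_gb] at h2
    rw [bPair, h1, h2]
  right_inv := by
    rintro ⟨e, he⟩
    refine Subtype.ext ?_
    show eQ ⟨bPair H e, bPair_trans H e⟩ H (stabS_bPair H e he) = e
    set q : {p : PP m // TransPair (m+1) p} := ⟨bPair H e, bPair_trans H e⟩ with hqdef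
    set hq := stabS_bPair H e he
    have hf : ∀ c : ModularFP ⧸ H, fQ q H hq c = e.symm c := by
      intro c
      obtain ⟨u, rfl⟩ := QuotientGroup.mk_surjective c
      rw [fQ_mk]
      have : qHom q = actHom H e := actHom_eq_qHom H e
      rw [this, actHom_apply, he, MulAction.Quotient.smul_mk, smul_eq_mul, mul_one]
    have hsymm : (eQ q H hq).symm = e.symm := by
      ext c
      rw [eQ_symm_apply, hf]
    ext x
    have := congrArg (fun f => (Equiv.symm f)) (Equiv.ext_iff.mpr (fun c => ?_) :
      (eQ q H hq).symm = e.symm)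
    · exact Equiv.ext_iff.mp (by simpa using this) x
    · rw [hsymm]

end Stmt18Aux
end Part4

section Part5
open Equiv Subgroup MulAction Monoid
namespace Stmt18Aux

variable {m : ℕ}

def prodFstEq {α β : Type*} (a : α) : {x : α × β // x.1 = a} ≃ β where
  toFun x := x.1.2
  invFun b := ⟨(a, b), rfl⟩
  left_inv := by rintro ⟨⟨x1, x2⟩, rfl⟩; rfl
  right_inv b := rfl

lemma card_pointed (H : Subgroup ModularFP) (hH : H.index = m + 1) :
    Nat.card {e : Fin (m+1) ≃ ModularFP ⧸ H // e 0 = QuotientGroup.mk (1:ModularFP)} = m ! := by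
  have hcard : Nat.card (ModularFP ⧸ H) = m + 1 := hH
  haveI : Finite (ModularFP ⧸ H) := Nat.finite_of_card_ne_zero (by omega)
  let E₀ : ModularFP ⧸ H ≃ Fin (m+1) := Finite.equivFinOfCardEq hcard
  let E : ModularFP ⧸ H ≃ Fin (m+1) :=
    E₀.trans (Equiv.swap (E₀ (QuotientGroup.mk 1)) 0)
  have hE : E (QuotientGroup.mk 1) = 0 := by
    show Equiv.swap (E₀ (QuotientGroup.mk 1)) 0 (E₀ (QuotientGroup.mk 1)) = 0
    rw [Equiv.swap_apply_left]
  let eq1 : {e : Fin (m+1) ≃ ModularFP ⧸ H // e 0 = QuotientGroup.mk (1:ModularFP)} ≃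
      {σ : Equiv.Perm (Fin (m+1)) // σ 0 = 0} :=
    Equiv.subtypeEquiv (Equiv.equivCongr (Equiv.refl _) E) (fun e => by
      show e 0 = QuotientGroup.mk 1 ↔ E (e ((Equiv.refl _).symm 0)) = 0
      simp only [Equiv.refl_symm, Equiv.refl_apply]
      constructor
      · intro h; rw [h, hE]
      · intro h; exact E.injective (by rw [h, hE]))
  let eq2 : {σ : Equiv.Perm (Fin (m+1)) // σ 0 = 0} ≃
      {x : Fin (m+1) × Equiv.Perm (Fin m) // x.1 = 0} :=
    Equiv.subtypeEquiv Equiv.Perm.decomposeFin (fun σ => by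
      constructor
      · intro h
        have h2 := Equiv.Perm.decomposeFin_symm_apply_zero
          (Equiv.Perm.decomposeFin σ).1 (Equiv.Perm.decomposeFin σ).2
        rw [Prod.mk.eta, Equiv.symm_apply_apply] at h2
        rw [← h2, h]
      · intro h
        have h2 := Equiv.Perm.decomposeFin_symm_apply_zero
          (Equiv.Perm.decomposeFin σ).1 (Equiv.Perm.decomposeFin σ).2
        rw [Prod.mk.eta, Equiv.symm_apply_apply] at h2
        rw [h2, h])
  rw [Nat.card_congr ((eq1.trans eq2).trans (prodFstEq 0)), Nat.card_eq_fintype_card,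
    Fintype.card_perm, Fintype.card_fin]

end Stmt18Aux
end Part5


open Stmt18Aux in
/-- The number of subgroups of index `n` in the free product `ℤ/2ℤ ∗ ℤ/3ℤ` equals
`a_n / (n-1)!`, where `a_n` is the number of pairs `(τ₁, τ₂)` of permutations of `Fin n`
with `τ₁² = 1` and `τ₂³ = 1` such that the subgroup `⟨τ₁, τ₂⟩` acts transitively on
`Fin n`. -/
theorem stmt_18 (n : ℕ) (hn : 1 ≤ n) :
    Nat.card {H : Subgroup ModularFP // H.index = n} * (n - 1)! =
      Nat.card {p : Equiv.Perm (Fin n) × Equiv.Perm (Fin n) // TransPair n p} := by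
  obtain ⟨m, rfl⟩ : ∃ m, n = m + 1 := ⟨n - 1, (Nat.succ_pred_eq_of_pos hn).symm⟩
  classical
  let cl : {p : PP m // TransPair (m+1) p} → {H : Subgroup ModularFP // H.index = m+1} :=
    fun q => ⟨stabS q, stabS_index q⟩
  have fibEq : ∀ Hs : {H : Subgroup ModularFP // H.index = m+1},
      Nat.card {q : {p : PP m // TransPair (m+1) p} // cl q = Hs} = m ! := by
    intro Hs
    have e1 : {q : {p : PP m // TransPair (m+1) p} // cl q = Hs} ≃
        {q : {p : PP m // TransPair (m+1) p} // stabS q = Hs.1} :=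
      Equiv.subtypeEquivRight (fun q => by
        constructor
        · intro h; exact congrArg Subtype.val h
        · intro h; exact Subtype.ext h)
    rw [Nat.card_congr (e1.trans (fiberEquiv Hs.1)), card_pointed Hs.1 Hs.2]
  have hsurj : Function.Surjective cl := by
    intro Hs
    have h0 : Nat.card {q : {p : PP m // TransPair (m+1) p} // cl q = Hs} ≠ 0 := by
      rw [fibEq Hs]; exact (Nat.factorial_pos m).ne'
    obtain ⟨⟨q, hq⟩⟩ := (Nat.card_ne_zero.mp h0).1
    exact ⟨q, hq⟩
  haveI : Finite {H : Subgroup ModularFP // H.index = m+1} := Finite.of_surjective cl hsurj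
  haveI : Fintype {H : Subgroup ModularFP // H.index = m+1} := Fintype.ofFinite _
  haveI : Fintype {p : PP m // TransPair (m+1) p} := Fintype.ofFinite _
  rw [Nat.card_congr (Equiv.sigmaFiberEquiv cl).symm]
  haveI : ∀ Hs : {H : Subgroup ModularFP // H.index = m+1},
      Fintype {q : {p : PP m // TransPair (m+1) p} // cl q = Hs} :=
    fun _ => Fintype.ofFinite _
  have hsig : Nat.card ((Hs : {H : Subgroup ModularFP // H.index = m+1}) ×
        {q : {p : PP m // TransPair (m+1) p} // cl q = Hs}) =
      ∑ Hs : {H : Subgroup ModularFP // H.index = m+1},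
        Nat.card {q : {p : PP m // TransPair (m+1) p} // cl q = Hs} := by
    simp only [Nat.card_eq_fintype_card]
    convert Fintype.card_sigma using 2
  rw [hsig, Finset.sum_congr rfl (fun Hs _ => fibEq Hs), Finset.sum_const, smul_eq_mul,
    Finset.card_univ, Nat.card_eq_fintype_card]
  simp
end
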